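/- arXiv:1810.07214 — 15 statements merged into one kernel-verified Lean document; each statement's English description precedes it below -/
import Mathlib

section
/- Let (P, ≤, ') be a poset with a unary operation, and define M(x,y) = L(U(x,y'), y) and R(x,y) = L(U(L(y,x), x')). If P satisfies L(x) ⊆ L(U(L(U(x,y'), y), y')) for all x, y ∈ P, then for all x, y, z ∈ P, M(x,y) ⊆ L(z) implies L(x) ⊆ R(y,z). -/
open Set

theorem lowerBounds_upperBounds_union_mono {P : Type*} [Preorder P] {s t : Set P} (u : Set P)
    (hst : s ⊆ t) : lowerBounds (upperBounds (s ∪ u)) ⊆ lowerBounds (upperBounds (t ∪ u)) :=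
  lowerBounds_mono_set (upperBounds_mono_set (union_subset_union_left u hst))

theorem stmt1 {P : Type*} [PartialOrder P] (f : P → P)
    (h : ∀ x y : P, lowerBounds {x} ⊆
      lowerBounds (upperBounds (lowerBounds (upperBounds {x, f y} ∪ {y}) ∪ {f y}))) :
    ∀ x y z : P, lowerBounds (upperBounds {x, f y} ∪ {y}) ⊆ lowerBounds {z} →
      lowerBounds {x} ⊆ lowerBounds (upperBounds (lowerBounds {z, y} ∪ {f y})) := by
  intro x y z hM
  have hMzy : lowerBounds (upperBounds {x, f y} ∪ {y}) ⊆ lowerBounds {z, y} := fun m hm => by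
    rw [lowerBounds_insert, ← lowerBounds_singleton]
    exact ⟨hM hm, lowerBounds_mono_set subset_union_right hm⟩
  exact (h x y).trans (lowerBounds_upperBounds_union_mono {f y} hMzy)
end

section
/- Let (P, ≤, ') be a poset with a unary operation, and define M(x,y) = L(U(x,y'), y) and R(x,y) = L(U(L(y,x), x')). If P satisfies L(U(L(x,y), y'), y) ⊆ L(x) for all x, y ∈ P, then for all x, y, z ∈ P, L(x) ⊆ R(y,z) implies M(x,y) ⊆ L(z). -/
/-! Writing `A = L(z, y) ∪ {y'}`, both `x` (by assumption) and `y'` lie in `L(U(A))`, so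
`U(A) ⊆ U(x, y')`; hence `M(x, y) ⊆ L(U(A), y) ⊆ L(z)` by the hypothesis at `(z, y)`. -/

open Set

theorem stmt2 {P : Type*} [PartialOrder P] (f : P → P)
    (h : ∀ x y : P, lowerBounds (upperBounds (lowerBounds {x, y} ∪ {f y}) ∪ {y}) ⊆
      lowerBounds {x}) :
    ∀ x y z : P, lowerBounds {x} ⊆ lowerBounds (upperBounds (lowerBounds {z, y} ∪ {f y})) →
      lowerBounds (upperBounds {x, f y} ∪ {y}) ⊆ lowerBounds {z} := by
  intro x y z hx
  set A := lowerBounds {z, y} ∪ {f y}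
  have hxA : {x, f y} ⊆ lowerBounds (upperBounds A) :=
    insert_subset (hx (by simp)) <|
      singleton_subset_iff.mpr (subset_lowerBounds_upperBounds A (Or.inr rfl))
  have hUA : upperBounds A ⊆ upperBounds {x, f y} :=
    (subset_upperBounds_lowerBounds _).trans (upperBounds_mono_set hxA)
  exact (lowerBounds_mono_set (union_subset_union_left {y} hUA)).trans (h z y)
end

section
/- Let (P, ≤, ', 0, 1) be a bounded poset with a unary operation satisfying 1' = 0, L(x) ⊆ L(U(L(U(x,y'), y), y')) for all x, y, and L(U(L(x,y), y'), y) ⊆ L(x) for all x, y. Define M(x,y) = L(U(x,y'), y) and R(x,y) = L(U(L(y,x), x')). Then (P, ≤, ', M, R, 0, 1) is an operator left residuated poset, i.e. (i) M(x,1) = M(1,x) = L(x), (ii) M(x,y) ⊆ L(z) iff L(x) ⊆ R(y,z), and (iii) R(x,0) = L(x'). -/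
/-!
(i) and (iii) hold because `L(U(1, a)) = P` and `U(L(0, a)) = P`. For the adjunction (ii): `M(x, y) ⊆ L(y)`, so `M(x, y) ⊆ L(z)` gives `M(x, y) ⊆ L(z, y)`, and the first
axiom pushes this through `L(U(-, y'))`; conversely `L(x) ⊆ R(y, z)` puts `x` and `y'` in the
closure `L(U(L(z, y), y'))`, so `U(x, y') ⊇ U(L(z, y), y')`, and the second axiom finishes.
-/

open Set

section

variable {P : Type*} [PartialOrder P]

/-- `M(x, y)` of the paper, with `f` for `'`. -/
def lowerMul (f : P → P) (x y : P) : Set P :=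
  lowerBounds (upperBounds {x, f y} ∪ {y})

/-- `R(x, y)` of the paper, with `f` for `'`. -/
def lowerRes (f : P → P) (x y : P) : Set P :=
  lowerBounds (upperBounds (lowerBounds {y, x} ∪ {f x}))

theorem lowerBounds_upperBounds_singleton (a : P) :
    lowerBounds (upperBounds {a}) = lowerBounds {a} := by
  rw [upperBounds_singleton, lowerBounds_Ici, lowerBounds_singleton]

theorem upperBounds_subset_of_subset_lowerBounds_upperBounds {s t : Set P}
    (h : s ⊆ lowerBounds (upperBounds t)) : upperBounds t ⊆ upperBounds s :=
  (gc_upperBounds_lowerBounds s (OrderDual.toDual (upperBounds t))).2 h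

theorem lowerBounds_upperBounds_insert_of_isTop {o : P} (ho : IsTop o) (s : Set P) :
    lowerBounds (upperBounds (insert o s)) = univ :=
  eq_univ_of_forall fun w _ hu => (ho w).trans (hu (mem_insert o s))

theorem upperBounds_lowerBounds_insert_of_isBot {z : P} (hz : IsBot z) (s : Set P) :
    upperBounds (lowerBounds (insert z s)) = univ :=
  eq_univ_of_forall fun u _ hl => (hl (mem_insert z s)).trans (hz u)

theorem lowerMul_subset_lowerBounds_right (f : P → P) (x y : P) :
    lowerMul f x y ⊆ lowerBounds {y} := by
  rw [lowerMul, lowerBounds_union]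
  exact inter_subset_right

theorem lowerMul_top_right {f : P → P} {z o : P} (hz : IsBot z) (ho : IsTop o) (hfo : f o = z)
    (x : P) : lowerMul f x o = lowerBounds {x} := by
  rw [lowerMul, hfo, lowerBounds_union, lowerBounds_singleton (a := o), ho.Iic_eq, inter_univ,
    upperBounds_insert, upperBounds_singleton, hz.Ici_eq, inter_univ, lowerBounds_Ici,
    lowerBounds_singleton]

theorem lowerMul_top_left (f : P → P) {o : P} (ho : IsTop o) (x : P) :
    lowerMul f o x = lowerBounds {x} := by
  rw [lowerMul, lowerBounds_union, lowerBounds_upperBounds_insert_of_isTop ho, univ_inter]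

theorem lowerRes_bot_right (f : P → P) {z : P} (hz : IsBot z) (x : P) :
    lowerRes f x z = lowerBounds {f x} := by
  rw [lowerRes, upperBounds_union, upperBounds_lowerBounds_insert_of_isBot hz, univ_inter,
    lowerBounds_upperBounds_singleton]

theorem lowerMul_subset_iff_subset_lowerRes {f : P → P}
    (hequ1 : ∀ x y : P, lowerBounds {x} ⊆ lowerBounds (upperBounds (lowerMul f x y ∪ {f y})))
    (hequ2 : ∀ x y : P, lowerBounds (upperBounds (lowerBounds {x, y} ∪ {f y}) ∪ {y}) ⊆
      lowerBounds {x})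
    (x y w : P) : lowerMul f x y ⊆ lowerBounds {w} ↔ lowerBounds {x} ⊆ lowerRes f y w := by
  constructor
  · intro h
    have hwy : lowerMul f x y ⊆ lowerBounds {w, y} := by
      rw [insert_eq, lowerBounds_union]
      exact subset_inter h (lowerMul_subset_lowerBounds_right f x y)
    exact (hequ1 x y).trans
      (lowerBounds_mono_set (upperBounds_mono_set (union_subset_union_left _ hwy)))
  · intro h
    set S := lowerBounds {w, y} ∪ {f y}
    have hx : x ∈ lowerBounds (upperBounds S) := h (by simp)
    have hfy : f y ∈ lowerBounds (upperBounds S) :=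
      subset_lowerBounds_upperBounds S (mem_union_right _ rfl)
    have hU : upperBounds S ⊆ upperBounds {x, f y} :=
      upperBounds_subset_of_subset_lowerBounds_upperBounds
        (insert_subset hx (singleton_subset_iff.2 hfy))
    exact (lowerBounds_mono_set (union_subset_union_left _ hU)).trans (hequ2 w y)

end

theorem stmt3 {P : Type*} [PartialOrder P] (f : P → P) (z o : P)
    (h0 : ∀ x, z ≤ x) (h1 : ∀ x, x ≤ o)
    (h1' : f o = z)
    (hequ1 : ∀ x y : P, lowerBounds {x} ⊆
      lowerBounds (upperBounds (lowerBounds (upperBounds {x, f y} ∪ {y}) ∪ {f y})))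
    (hequ2 : ∀ x y : P, lowerBounds (upperBounds (lowerBounds {x, y} ∪ {f y}) ∪ {y}) ⊆
      lowerBounds {x}) :
    (∀ x : P, lowerBounds (upperBounds {x, f o} ∪ {o}) = lowerBounds {x}
      ∧ lowerBounds (upperBounds {o, f x} ∪ {x}) = lowerBounds {x}) ∧
    (∀ x y w : P, lowerBounds (upperBounds {x, f y} ∪ {y}) ⊆ lowerBounds {w} ↔
      lowerBounds {x} ⊆ lowerBounds (upperBounds (lowerBounds {w, y} ∪ {f y}))) ∧
    (∀ x : P, lowerBounds (upperBounds (lowerBounds {z, x} ∪ {f x})) = lowerBounds {f x}) :=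
  ⟨fun x => ⟨lowerMul_top_right h0 h1 h1' x, lowerMul_top_left f h1 x⟩,
    lowerMul_subset_iff_subset_lowerRes hequ1 hequ2,
    lowerRes_bot_right f h0⟩
end

section
/- Every pseudo-orthomodular poset satisfies both L(x) ⊆ L(U(L(U(x,y'), y), y')) and L(U(L(x,y), y'), y) ⊆ L(x) for all x, y. -/
/-! An antitone involution carries lower bounds to upper bounds of the image, so applying the
complementation to the pseudo-orthomodular identity for `x'` and `y'` yields the dual identity
`U(L(U(x, y), y'), y) = U(x, y)`. Taking `y'` for `y` there gives the first inclusion, since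
`L(x) ⊆ LU(x, y')`; the second is the identity itself followed by `L(x, y) ⊆ L(x)`. -/

open Set Function

section AntitoneInvolution

variable {P : Type*} [PartialOrder P] {f : P → P}

theorem image_lowerBounds_of_antitone_of_involutive (hf : Antitone f) (hi : Involutive f)
    (S : Set P) : f '' lowerBounds S = upperBounds (f '' S) := by
  ext u
  constructor
  · rintro ⟨t, ht, rfl⟩ _ ⟨s, hs, rfl⟩
    exact hf (ht hs)
  · intro hu
    refine ⟨f u, fun s hs => ?_, hi u⟩
    simpa only [hi s] using hf (hu (mem_image_of_mem f hs))

theorem image_upperBounds_of_antitone_of_involutive (hf : Antitone f) (hi : Involutive f)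
    (S : Set P) : f '' upperBounds S = lowerBounds (f '' S) :=
  image_lowerBounds_of_antitone_of_involutive (P := Pᵒᵈ) hf.dual hi S

theorem upperBounds_lowerBounds_upperBounds_pair_union_eq (hf : Antitone f) (hi : Involutive f)
    (hpo : ∀ x y : P, lowerBounds (upperBounds (lowerBounds {x, y} ∪ {f y}) ∪ {y}) =
      lowerBounds {x, y})
    (x y : P) :
    upperBounds (lowerBounds (upperBounds {x, y} ∪ {f y}) ∪ {y}) = upperBounds {x, y} := by
  have h := congrArg (f '' ·) (hpo (f x) (f y))
  simpa only [image_lowerBounds_of_antitone_of_involutive hf hi,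
    image_upperBounds_of_antitone_of_involutive hf hi, image_union, image_pair, image_singleton,
    hi _] using h

end AntitoneInvolution

theorem stmt4_general {P : Type*} [PartialOrder P] (f : P → P)
    (hant : ∀ x y : P, x ≤ y → f y ≤ f x)
    (hinv : ∀ x : P, f (f x) = x)
    (hpo : ∀ x y : P, lowerBounds (upperBounds (lowerBounds {x, y} ∪ {f y}) ∪ {y}) =
      lowerBounds {x, y}) :
    (∀ x y : P, lowerBounds {x} ⊆
      lowerBounds (upperBounds (lowerBounds (upperBounds {x, f y} ∪ {y}) ∪ {f y}))) ∧
    (∀ x y : P, lowerBounds (upperBounds (lowerBounds {x, y} ∪ {f y}) ∪ {y}) ⊆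
      lowerBounds {x}) := by
  have hf : Antitone f := fun x y h => hant x y h
  refine ⟨fun x y => ?_, fun x y => ?_⟩
  · have hdual := upperBounds_lowerBounds_upperBounds_pair_union_eq hf hinv hpo x (f y)
    rw [hinv y] at hdual
    rw [hdual]
    exact fun t ht u hu => (ht rfl).trans (hu (mem_insert x _))
  · rw [hpo]
    exact lowerBounds_mono_set (singleton_subset_iff.2 (mem_insert x {y}))

theorem stmt4 {P : Type*} [PartialOrder P] (f : P → P) (z o : P)
    (h0 : ∀ x, z ≤ x) (h1 : ∀ x, x ≤ o)
    (hc1 : ∀ x : P, lowerBounds {x, f x} = {z})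
    (hc2 : ∀ x : P, upperBounds {x, f x} = {o})
    (hant : ∀ x y : P, x ≤ y → f y ≤ f x)
    (hinv : ∀ x : P, f (f x) = x)
    (hpo : ∀ x y : P, lowerBounds (upperBounds (lowerBounds {x, y} ∪ {f y}) ∪ {y}) =
      lowerBounds {x, y}) :
    (∀ x y : P, lowerBounds {x} ⊆
      lowerBounds (upperBounds (lowerBounds (upperBounds {x, f y} ∪ {y}) ∪ {f y}))) ∧
    (∀ x y : P, lowerBounds (upperBounds (lowerBounds {x, y} ∪ {f y}) ∪ {y}) ⊆
      lowerBounds {x}) :=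
  stmt4_general f hant hinv hpo
end

section
/- Let (P, ≤, ') be a poset with a unary operation, and define M(x,y) = L(x,y) and R(x,y) = L(U(y,x')). If P satisfies L(x) ⊆ L(U(L(x,y), y')) for all x, y, then for all x, y, z ∈ P, M(x,y) ⊆ L(z) implies L(x) ⊆ R(y,z). -/
theorem upperBounds_insert_subset_upperBounds_union {P : Type*} [Preorder P] {s t : Set P} {z : P}
    (hs : s ⊆ lowerBounds {z}) : upperBounds (insert z t) ⊆ upperBounds (s ∪ t) := by
  rw [upperBounds_insert, upperBounds_union]
  exact Set.inter_subset_inter_left _ fun u hzu w hw => (hs hw rfl).trans hzu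

theorem stmt5 {P : Type*} [PartialOrder P] (f : P → P)
    (h : ∀ x y : P, lowerBounds {x} ⊆ lowerBounds (upperBounds (lowerBounds {x, y} ∪ {f y}))) :
    ∀ x y z : P, lowerBounds {x, y} ⊆ lowerBounds {z} →
      lowerBounds {x} ⊆ lowerBounds (upperBounds {z, f y}) := fun x y _ hM =>
  (h x y).trans (lowerBounds_mono_set (upperBounds_insert_subset_upperBounds_union hM))
end

section
/- Let (P, ≤, ') be a poset with a unary operation, and define M(x,y) = L(x,y) and R(x,y) = L(U(y,x')). If P satisfies L(U(x,y'), y) ⊆ L(x) for all x, y, then for all x, y, z ∈ P, L(x) ⊆ R(y,z) implies M(x,y) ⊆ L(z). -/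
theorem stmt6 {P : Type*} [PartialOrder P] (f : P → P)
    (h : ∀ x y : P, lowerBounds (upperBounds {x, f y} ∪ {y}) ⊆ lowerBounds {x}) :
    ∀ x y z : P, lowerBounds {x} ⊆ lowerBounds (upperBounds {z, f y}) →
      lowerBounds {x, y} ⊆ lowerBounds {z} := by
  intro x y z hxz w hw
  rw [lowerBounds_insert, lowerBounds_singleton] at hw
  obtain ⟨hwx, hwy⟩ := hw
  apply h z y
  rw [lowerBounds_union, lowerBounds_singleton]
  exact ⟨hxz (by rwa [lowerBounds_singleton]), hwy⟩
end

section
/- Let (P, ≤, ', 0, 1) be a bounded poset with a unary operation satisfying L(x) ⊆ L(U(L(x,y), y')) and L(U(x,y'), y) ⊆ L(x) for all x, y. Define M(x,y) = L(x,y) and R(x,y) = L(U(y,x')). Then (P, ≤, ', M, R, 0, 1) is an operator residuated poset: M is commutative, M(x,1) = M(1,x) = L(x), M(x,y) ⊆ L(z) iff L(x) ⊆ R(y,z), and R(x,0) = L(x'). -/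
/-!
Condition (7) is the unit and condition (8) the counit of the residuation
`L(x, y) ⊆ L(w) ↔ L(x) ⊆ L(U(w, y'))`; the remaining identities only use that `1` is the top
and `0` the bottom element.
-/

section

variable {α : Type*} [Preorder α]

theorem IsTop.lowerBounds_insert {o : α} (ho : IsTop o) (s : Set α) :
    lowerBounds (insert o s) = lowerBounds s := by
  rw [_root_.lowerBounds_insert, ho.Iic_eq, Set.univ_inter]

theorem IsBot.lowerBounds_upperBounds_pair {z : α} (hz : IsBot z) (a : α) :
    lowerBounds (upperBounds {z, a}) = lowerBounds {a} := by
  rw [upperBounds_insert, hz.Ici_eq, Set.univ_inter, upperBounds_singleton, lowerBounds_Ici,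
    lowerBounds_singleton]

theorem lowerBounds_subset_lowerBounds_singleton_iff {s : Set α} {w : α} :
    lowerBounds s ⊆ lowerBounds {w} ↔ w ∈ upperBounds (lowerBounds s) := by
  rw [lowerBounds_singleton]
  exact Iff.rfl

theorem upperBounds_insert_subset_upperBounds_union_s7 {s t : Set α} {w : α}
    (hw : w ∈ upperBounds s) : upperBounds (insert w t) ⊆ upperBounds (s ∪ t) := by
  rw [upperBounds_insert, upperBounds_union]
  exact Set.inter_subset_inter_left _ fun _ hu => upperBounds_mono_mem hu hw

theorem lowerBounds_pair_subset_iff_of_unit_of_counit {x y w c : α}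
    (hunit : lowerBounds {x} ⊆ lowerBounds (upperBounds (lowerBounds {x, y} ∪ {c})))
    (hcounit : lowerBounds (upperBounds {w, c} ∪ {y}) ⊆ lowerBounds {w}) :
    lowerBounds {x, y} ⊆ lowerBounds {w} ↔ lowerBounds {x} ⊆ lowerBounds (upperBounds {w, c}) := by
  constructor
  · intro hxy
    exact hunit.trans <| lowerBounds_mono_set <| upperBounds_insert_subset_upperBounds_union_s7 <|
      lowerBounds_subset_lowerBounds_singleton_iff.1 hxy
  · intro hx
    calc lowerBounds {x, y} = lowerBounds {x} ∩ lowerBounds {y} := by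
          rw [Set.insert_eq, lowerBounds_union]
      _ ⊆ lowerBounds (upperBounds {w, c}) ∩ lowerBounds {y} := Set.inter_subset_inter_left _ hx
      _ = lowerBounds (upperBounds {w, c} ∪ {y}) := lowerBounds_union.symm
      _ ⊆ lowerBounds {w} := hcounit

end

theorem stmt7 {P : Type*} [PartialOrder P] (f : P → P) (z o : P)
    (h0 : ∀ x, z ≤ x) (h1 : ∀ x, x ≤ o)
    (hequ7 : ∀ x y : P, lowerBounds {x} ⊆
      lowerBounds (upperBounds (lowerBounds {x, y} ∪ {f y})))
    (hequ8 : ∀ x y : P, lowerBounds (upperBounds {x, f y} ∪ {y}) ⊆ lowerBounds {x}) :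
    (∀ x y : P, lowerBounds ({x, y} : Set P) = lowerBounds {y, x}) ∧
    (∀ x : P, lowerBounds ({x, o} : Set P) = lowerBounds {x}
      ∧ lowerBounds ({o, x} : Set P) = lowerBounds {x}) ∧
    (∀ x y w : P, lowerBounds {x, y} ⊆ lowerBounds {w} ↔
      lowerBounds {x} ⊆ lowerBounds (upperBounds {w, f y})) ∧
    (∀ x : P, lowerBounds (upperBounds {z, f x}) = lowerBounds {f x}) := by
  have ho : IsTop o := h1
  have hz : IsBot z := h0
  refine ⟨fun x y => by rw [Set.pair_comm], fun x => ⟨?_, ho.lowerBounds_insert {x}⟩,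
    fun x y w => lowerBounds_pair_subset_iff_of_unit_of_counit (hequ7 x y) (hequ8 w y),
    fun x => hz.lowerBounds_upperBounds_pair (f x)⟩
  rw [Set.pair_comm]
  exact ho.lowerBounds_insert {x}
end

section
/- Every pseudo-Boolean poset satisfies both L(x) ⊆ L(U(L(x,y), y')) and L(U(x,y'), y) ⊆ L(x) for all x, y. -/
/-!
An antitone involution `f` exchanges lower and upper bounds, so applying it to the
pseudo-Boolean law `L(U(x, y), y') = L(x, y')` at `(x', y')` yields the dual law
`U(L(x, y), y') = U(x, y')`. Both inclusions are then immediate: every lower bound of `x`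
lies below every upper bound of `{x, y'}`, and every lower bound of `{x, y}` lies below `x`.
-/

namespace Set

variable {P : Type*} [PartialOrder P] {f : P → P}

theorem lowerBounds_image_of_antitone_of_involutive (hf : Antitone f)
    (hinv : Function.Involutive f) (s : Set P) :
    lowerBounds (f '' s) = f '' upperBounds s := by
  ext a
  rw [mem_image_iff_of_inverse hinv.leftInverse hinv.rightInverse, mem_lowerBounds,
    forall_mem_image, mem_upperBounds]
  refine forall₂_congr fun b _ => ⟨fun h => ?_, fun h => ?_⟩
  · simpa only [hinv b] using hf h
  · simpa only [hinv a] using hf h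

theorem upperBounds_image_of_antitone_of_involutive (hf : Antitone f)
    (hinv : Function.Involutive f) (s : Set P) :
    upperBounds (f '' s) = f '' lowerBounds s :=
  lowerBounds_image_of_antitone_of_involutive (P := Pᵒᵈ) hf.dual hinv s

theorem upperBounds_lowerBounds_union_of_pseudoBoolean (hf : Antitone f)
    (hinv : Function.Involutive f)
    (hpb : ∀ x y : P, lowerBounds (upperBounds {x, y} ∪ {f y}) = lowerBounds {x, f y})
    (x y : P) : upperBounds (lowerBounds {x, y} ∪ {f y}) = upperBounds {x, f y} := by
  apply hinv.injective.image_injective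
  rw [← lowerBounds_image_of_antitone_of_involutive hf hinv,
    ← lowerBounds_image_of_antitone_of_involutive hf hinv, image_union,
    ← upperBounds_image_of_antitone_of_involutive hf hinv, image_pair, image_pair, image_singleton,
    hpb]

end Set

open Set

theorem stmt8_general {P : Type*} [PartialOrder P] (f : P → P)
    (hant : ∀ x y : P, x ≤ y → f y ≤ f x)
    (hinv : ∀ x : P, f (f x) = x)
    (hpb : ∀ x y : P, lowerBounds (upperBounds {x, y} ∪ {f y}) = lowerBounds {x, f y}) :
    (∀ x y : P, lowerBounds {x} ⊆ lowerBounds (upperBounds (lowerBounds {x, y} ∪ {f y}))) ∧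
    (∀ x y : P, lowerBounds (upperBounds {x, f y} ∪ {y}) ⊆ lowerBounds {x}) := by
  refine ⟨fun x y => ?_, fun x y => ?_⟩
  · rw [upperBounds_lowerBounds_union_of_pseudoBoolean hant hinv hpb, lowerBounds_singleton]
    exact fun t htx u hu => htx.trans (hu (mem_insert x _))
  · have hlaw : lowerBounds (upperBounds {x, f y} ∪ {y}) = lowerBounds {x, y} := by
      simpa only [hinv] using hpb x (f y)
    rw [hlaw]
    exact lowerBounds_mono_set (singleton_subset_iff.2 (mem_insert x _))

theorem stmt8 {P : Type*} [PartialOrder P] (f : P → P) (z o : P)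
    (h0 : ∀ x, z ≤ x) (h1 : ∀ x, x ≤ o)
    (hc1 : ∀ x : P, lowerBounds {x, f x} = {z})
    (hc2 : ∀ x : P, upperBounds {x, f x} = {o})
    (hant : ∀ x y : P, x ≤ y → f y ≤ f x)
    (hinv : ∀ x : P, f (f x) = x)
    (hpb : ∀ x y : P, lowerBounds (upperBounds {x, y} ∪ {f y}) = lowerBounds {x, f y}) :
    (∀ x y : P, lowerBounds {x} ⊆ lowerBounds (upperBounds (lowerBounds {x, y} ∪ {f y}))) ∧
    (∀ x y : P, lowerBounds (upperBounds {x, f y} ∪ {y}) ⊆ lowerBounds {x}) :=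
  stmt8_general f hant hinv hpb
end

section
/- In a poset with complementation, the identities L(U(x,y), y') = L(x,y') and U(L(x,y), y') = U(x,y') (for all x, y) are equivalent. -/
/-! An antitone involution `f` is an order isomorphism onto the dual order, so `f` exchanges
lower and upper bounds. Applying `f` to the first identity at `(x', y')` gives the second at
`(x, y)`; the converse is the same argument in the order dual. -/

namespace Antitone

variable {P : Type*} [PartialOrder P] {f : P → P}

theorem image_lowerBounds_of_involutive (hf : Antitone f) (hff : Function.Involutive f)
    (s : Set P) : f '' lowerBounds s = upperBounds (f '' s) := by
  refine hf.image_lowerBounds_subset_upperBounds_image.antisymm fun a ha => ⟨f a, ?_, hff a⟩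
  simpa only [Set.image_image, hff _, Set.image_id'] using hf.mem_lowerBounds_image ha

theorem image_upperBounds_of_involutive (hf : Antitone f) (hff : Function.Involutive f)
    (s : Set P) : f '' upperBounds s = lowerBounds (f '' s) :=
  hf.dual.image_lowerBounds_of_involutive hff s

theorem upperBounds_lowerBounds_union_of_lowerBounds_upperBounds_union (hf : Antitone f)
    (hff : Function.Involutive f)
    (H : ∀ x y : P, lowerBounds (upperBounds {x, y} ∪ {f y}) = lowerBounds {x, f y})
    (x y : P) : upperBounds (lowerBounds {x, y} ∪ {f y}) = upperBounds {x, f y} := by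
  simpa only [hf.image_lowerBounds_of_involutive hff, Set.image_union, Set.image_singleton,
    Set.image_pair, hf.image_upperBounds_of_involutive hff, hff _]
    using congrArg (f '' ·) (H (f x) (f y))

end Antitone

theorem stmt9_general {P : Type*} [PartialOrder P] (f : P → P)
    (hant : ∀ x y : P, x ≤ y → f y ≤ f x)
    (hinv : ∀ x : P, f (f x) = x) :
    (∀ x y : P, lowerBounds (upperBounds {x, y} ∪ {f y}) = lowerBounds {x, f y}) ↔
    (∀ x y : P, upperBounds (lowerBounds {x, y} ∪ {f y}) = upperBounds {x, f y}) := by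
  have hf : Antitone f := fun x y => hant x y
  exact ⟨hf.upperBounds_lowerBounds_union_of_lowerBounds_upperBounds_union hinv,
    hf.dual.upperBounds_lowerBounds_union_of_lowerBounds_upperBounds_union hinv⟩

theorem stmt9 {P : Type*} [PartialOrder P] (f : P → P) (z o : P)
    (h0 : ∀ x, z ≤ x) (h1 : ∀ x, x ≤ o)
    (hc1 : ∀ x : P, lowerBounds {x, f x} = {z})
    (hc2 : ∀ x : P, upperBounds {x, f x} = {o})
    (hant : ∀ x y : P, x ≤ y → f y ≤ f x)
    (hinv : ∀ x : P, f (f x) = x) :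
    (∀ x y : P, lowerBounds (upperBounds {x, y} ∪ {f y}) = lowerBounds {x, f y}) ↔
    (∀ x y : P, upperBounds (lowerBounds {x, y} ∪ {f y}) = upperBounds {x, f y}) :=
  stmt9_general f hant hinv
end

section
/- In a poset with complementation, the identities L(U(L(x,y), y'), y) = L(x,y) and U(L(U(x,y), y'), y) = U(x,y) (for all x, y) are equivalent. -/
/-!
An antitone involution `f` maps upper bounds of `S` onto lower bounds of `f '' S` and vice versa.
Applying `f` to the second identity at `(x, y)` therefore turns it into the first identity at
`(f x, f y)`, and since `f` is a bijection the two identities are equivalent. One direction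
suffices: the other is the same statement in the order dual.
-/

section

open Set Function

variable {P : Type*} [Preorder P] {f : P → P}

theorem Antitone.image_upperBounds_of_involutive_s10 (hf : Antitone f) (hinv : Involutive f)
    (S : Set P) : f '' upperBounds S = lowerBounds (f '' S) := by
  refine (hf.image_upperBounds_subset_lowerBounds_image).antisymm fun u hu => ⟨f u, ?_, hinv u⟩
  simpa only [image_image, hinv _, image_id'] using hf.mem_upperBounds_image hu

theorem Antitone.image_lowerBounds_of_involutive_s10 (hf : Antitone f) (hinv : Involutive f)
    (S : Set P) : f '' lowerBounds S = upperBounds (f '' S) := by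
  refine (hf.image_lowerBounds_subset_upperBounds_image).antisymm fun u hu => ⟨f u, ?_, hinv u⟩
  simpa only [image_image, hinv _, image_id'] using hf.mem_lowerBounds_image hu

theorem upperBounds_lowerBounds_union_eq_of_lowerBounds_upperBounds_union_eq
    (hf : Antitone f) (hinv : Involutive f)
    (H : ∀ x y : P, lowerBounds (upperBounds (lowerBounds {x, y} ∪ {f y}) ∪ {y}) =
      lowerBounds {x, y})
    (x y : P) :
    upperBounds (lowerBounds (upperBounds {x, y} ∪ {f y}) ∪ {y}) = upperBounds {x, y} := by
  apply hinv.injective.image_injective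
  have hub := hf.image_upperBounds_of_involutive_s10 hinv
  have hlb := hf.image_lowerBounds_of_involutive_s10 hinv
  rw [hub, image_union, image_singleton, hlb, image_union, image_singleton, hub, image_pair]
  simpa only [hinv y] using H (f x) (f y)

end

theorem stmt10_general {P : Type*} [PartialOrder P] (f : P → P)
    (hant : ∀ x y : P, x ≤ y → f y ≤ f x)
    (hinv : ∀ x : P, f (f x) = x) :
    (∀ x y : P, lowerBounds (upperBounds (lowerBounds {x, y} ∪ {f y}) ∪ {y}) =
      lowerBounds {x, y}) ↔
    (∀ x y : P, upperBounds (lowerBounds (upperBounds {x, y} ∪ {f y}) ∪ {y}) =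
      upperBounds {x, y}) := by
  have hf : Antitone f := fun x y => hant x y
  refine ⟨upperBounds_lowerBounds_union_eq_of_lowerBounds_upperBounds_union_eq hf hinv, ?_⟩
  exact upperBounds_lowerBounds_union_eq_of_lowerBounds_upperBounds_union_eq (P := Pᵒᵈ)
    (f := OrderDual.toDual ∘ f ∘ OrderDual.ofDual) (fun x y h => hf h) hinv

theorem stmt10 {P : Type*} [PartialOrder P] (f : P → P) (z o : P)
    (h0 : ∀ x, z ≤ x) (h1 : ∀ x, x ≤ o)
    (hc1 : ∀ x : P, lowerBounds {x, f x} = {z})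
    (hc2 : ∀ x : P, upperBounds {x, f x} = {o})
    (hant : ∀ x y : P, x ≤ y → f y ≤ f x)
    (hinv : ∀ x : P, f (f x) = x) :
    (∀ x y : P, lowerBounds (upperBounds (lowerBounds {x, y} ∪ {f y}) ∪ {y}) =
      lowerBounds {x, y}) ↔
    (∀ x y : P, upperBounds (lowerBounds (upperBounds {x, y} ∪ {f y}) ∪ {y}) =
      upperBounds {x, y}) :=
  stmt10_general f hant hinv
end

section
/- Every pseudo-Boolean poset is a pseudo-orthomodular poset. -/
/-! The pseudo-Boolean law for the pair `(x, y')` reads `L(U(x, y'), y) = L(x, y)`. Since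
`U(x, y') ⊆ U(L(x, y), y')`, the left side of the pseudo-orthomodular law lies between
`L(x, y)` and `L(U(x, y'), y)`, hence equals `L(x, y)`. -/

section

variable {P : Type*} [Preorder P]

lemma upperBounds_pair_subset_upperBounds_lowerBounds_union (x y w : P) :
    upperBounds {x, w} ⊆ upperBounds (lowerBounds {x, y} ∪ {w}) := by
  intro u hu
  rw [upperBounds_union, upperBounds_singleton]
  exact ⟨fun t ht => (ht (Set.mem_insert x _)).trans (hu (Set.mem_insert x _)),
    hu (Set.mem_insert_of_mem x rfl)⟩

lemma lowerBounds_pair_subset_lowerBounds_upperBounds_lowerBounds_union (x y w : P) :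
    lowerBounds {x, y} ⊆ lowerBounds (upperBounds (lowerBounds {x, y} ∪ {w}) ∪ {y}) := by
  intro t ht
  rw [lowerBounds_union, lowerBounds_singleton]
  exact ⟨fun u hu => hu (Or.inl ht), ht (Set.mem_insert_of_mem x rfl)⟩

end

theorem stmt11_general {P : Type*} [PartialOrder P] (f : P → P)
    (hinv : ∀ x : P, f (f x) = x)
    (hpb : ∀ x y : P, lowerBounds (upperBounds {x, y} ∪ {f y}) = lowerBounds {x, f y}) :
    ∀ x y : P, lowerBounds (upperBounds (lowerBounds {x, y} ∪ {f y}) ∪ {y}) =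
      lowerBounds {x, y} := by
  intro x y
  have hpb' : lowerBounds (upperBounds {x, f y} ∪ {y}) = lowerBounds {x, y} := by
    simpa only [hinv] using hpb x (f y)
  refine Set.Subset.antisymm ?_
    (lowerBounds_pair_subset_lowerBounds_upperBounds_lowerBounds_union x y (f y))
  calc lowerBounds (upperBounds (lowerBounds {x, y} ∪ {f y}) ∪ {y})
      _ ⊆ lowerBounds (upperBounds {x, f y} ∪ {y}) := lowerBounds_mono_set <|
        Set.union_subset_union_left _ (upperBounds_pair_subset_upperBounds_lowerBounds_union x y _)
      _ = lowerBounds {x, y} := hpb'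

theorem stmt11 {P : Type*} [PartialOrder P] (f : P → P) (z o : P)
    (h0 : ∀ x, z ≤ x) (h1 : ∀ x, x ≤ o)
    (hc1 : ∀ x : P, lowerBounds {x, f x} = {z})
    (hc2 : ∀ x : P, upperBounds {x, f x} = {o})
    (hant : ∀ x y : P, x ≤ y → f y ≤ f x)
    (hinv : ∀ x : P, f (f x) = x)
    (hpb : ∀ x y : P, lowerBounds (upperBounds {x, y} ∪ {f y}) = lowerBounds {x, f y}) :
    ∀ x y : P, lowerBounds (upperBounds (lowerBounds {x, y} ∪ {f y}) ∪ {y}) =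
      lowerBounds {x, y} :=
  stmt11_general f hinv hpb
end

section
/- Every Boolean poset (a poset with complementation that is distributive) is a pseudo-Boolean poset, i.e. satisfies L(U(x,y), y') = L(x,y') for all x, y. -/
theorem lowerBounds_upperBounds_lowerBounds {P : Type*} [Preorder P] (s : Set P) :
    lowerBounds (upperBounds (lowerBounds s)) = lowerBounds s :=
  gc_upperBounds_lowerBounds.u_l_u_eq_u (OrderDual.toDual s)

theorem lowerBounds_upperBounds_lowerBounds_union_of_subset {P : Type*} [Preorder P]
    {s t : Set P} (h : t ⊆ lowerBounds s) :
    lowerBounds (upperBounds (lowerBounds s ∪ t)) = lowerBounds s := by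
  rw [Set.union_eq_self_of_subset_right h, lowerBounds_upperBounds_lowerBounds]

theorem stmt12_general {P : Type*} [PartialOrder P] (f : P → P) (z : P)
    (h0 : ∀ x, z ≤ x)
    (hc1 : ∀ x : P, lowerBounds {x, f x} = {z})
    (hdist : ∀ x y w : P, lowerBounds (upperBounds {x, y} ∪ {w}) =
      lowerBounds (upperBounds (lowerBounds {x, w} ∪ lowerBounds {y, w}))) :
    ∀ x y : P, lowerBounds (upperBounds {x, y} ∪ {f y}) = lowerBounds {x, f y} := by
  intro x y
  have hbot : {z} ⊆ lowerBounds {x, f y} := Set.singleton_subset_iff.2 fun b _ => h0 b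
  rw [hdist x y (f y), hc1 y, lowerBounds_upperBounds_lowerBounds_union_of_subset hbot]

theorem stmt12 {P : Type*} [PartialOrder P] (f : P → P) (z o : P)
    (h0 : ∀ x, z ≤ x) (h1 : ∀ x, x ≤ o)
    (hc1 : ∀ x : P, lowerBounds {x, f x} = {z})
    (hc2 : ∀ x : P, upperBounds {x, f x} = {o})
    (hant : ∀ x y : P, x ≤ y → f y ≤ f x)
    (hinv : ∀ x : P, f (f x) = x)
    (hdist : ∀ x y w : P, lowerBounds (upperBounds {x, y} ∪ {w}) =
      lowerBounds (upperBounds (lowerBounds {x, w} ∪ lowerBounds {y, w}))) :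
    ∀ x y : P, lowerBounds (upperBounds {x, y} ∪ {f y}) = lowerBounds {x, f y} :=
  stmt12_general f z h0 hc1 hdist
end

section
/- If a poset with complementation is a lattice and satisfies the pseudo-orthomodular identity L(U(L(x,y), y'), y) = L(x,y) for all x, y, then it satisfies the orthomodular law ((x ∧ y) ∨ y') ∧ y = x ∧ y for all x, y. -/
open Set

theorem lowerBounds_pair_eq_Iic_inf {α : Type*} [SemilatticeInf α] (a b : α) :
    lowerBounds {a, b} = Iic (a ⊓ b) :=
  isGLB_pair.lowerBounds_eq

theorem lowerBounds_upperBounds_lowerBounds_pair_union {α : Type*} [Lattice α] (x y c : α) :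
    lowerBounds (upperBounds (lowerBounds {x, y} ∪ {c}) ∪ {y}) = Iic (((x ⊓ y) ⊔ c) ⊓ y) := by
  rw [lowerBounds_pair_eq_Iic_inf, upperBounds_union, upperBounds_Iic, upperBounds_singleton,
    Ici_inter_Ici, lowerBounds_union, lowerBounds_Ici, lowerBounds_singleton, Iic_inter_Iic]

theorem stmt13_general {P : Type*} [Lattice P] (f : P → P)
    (hpo : ∀ x y : P, lowerBounds (upperBounds (lowerBounds {x, y} ∪ {f y}) ∪ {y}) =
      lowerBounds {x, y}) :
    ∀ x y : P, ((x ⊓ y) ⊔ f y) ⊓ y = x ⊓ y := by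
  intro x y
  have h := hpo x y
  rw [lowerBounds_upperBounds_lowerBounds_pair_union, lowerBounds_pair_eq_Iic_inf] at h
  exact Iic_injective h

theorem stmt13 {P : Type*} [Lattice P] (f : P → P) (z o : P)
    (h0 : ∀ x, z ≤ x) (h1 : ∀ x, x ≤ o)
    (hc1 : ∀ x : P, lowerBounds {x, f x} = {z})
    (hc2 : ∀ x : P, upperBounds {x, f x} = {o})
    (hant : ∀ x y : P, x ≤ y → f y ≤ f x)
    (hinv : ∀ x : P, f (f x) = x)
    (hpo : ∀ x y : P, lowerBounds (upperBounds (lowerBounds {x, y} ∪ {f y}) ∪ {y}) =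
      lowerBounds {x, y}) :
    ∀ x y : P, ((x ⊓ y) ⊔ f y) ⊓ y = x ⊓ y :=
  stmt13_general f hpo
end

section
/- Let (P, ≤, ') be a poset with a unary operation; for subsets define A' = {a' : a ∈ A}, M(A,B) = L(A ∪ B), and R(A,B) = L(U(B ∪ A')). Then the condition 'L(U(A, B'), B) ⊆ L(A) for all A, B ⊆ P' is equivalent to the condition 'for all A, B, C ⊆ P, L(A) ⊆ R(B,C) implies M(A,B) ⊆ L(C)'. -/
theorem lowerBounds_union_subset_iff {P : Type*} [Preorder P] (X : Set P → Set P → Set P) :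
    (∀ A B : Set P, lowerBounds (X A B ∪ B) ⊆ lowerBounds A) ↔
    (∀ A B C : Set P, lowerBounds A ⊆ lowerBounds (X C B) →
      lowerBounds (A ∪ B) ⊆ lowerBounds C) := by
  simp only [lowerBounds_union]
  exact ⟨fun H A B C hAC => (Set.inter_subset_inter_left _ hAC).trans (H C B),
    fun H A B => H (X A B) B A le_rfl⟩

theorem stmt17 {P : Type*} [PartialOrder P] (f : P → P) :
    (∀ A B : Set P, lowerBounds (upperBounds (A ∪ f '' B) ∪ B) ⊆ lowerBounds A) ↔
    (∀ A B C : Set P, lowerBounds A ⊆ lowerBounds (upperBounds (C ∪ f '' B)) →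
      lowerBounds (A ∪ B) ⊆ lowerBounds C) :=
  lowerBounds_union_subset_iff fun A B => upperBounds (A ∪ f '' B)
end

section
/- In an orthomodular lattice (L, ∨, ∧, ', 0, 1), defining x ⊙ y := (x ∨ y') ∧ y and x → y := (y ∧ x) ∨ x', we obtain a left residuated lattice: x ⊙ 1 = 1 ⊙ x = x for all x, and x ⊙ y ≤ z if and only if x ≤ y → z, for all x, y, z; moreover x → 0 = x'. -/
/-!
An antitone involution `f` is an order isomorphism onto the dual lattice, so it satisfies the
De Morgan laws. With them the orthomodular law, applied to `f y ≤ f a`, gives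
`(a ⊔ f y) ⊓ y = a` whenever `a ≤ y`; this is exactly what makes `· ⊓ y` undo `· ⊔ f y` on the
interval below `y`, and the residuation `(x ⊔ f y) ⊓ y ≤ w ↔ x ≤ (w ⊓ y) ⊔ f y` follows.
-/

open Function

namespace Antitone

variable {P : Type*} [Lattice P] {f : P → P}

theorem map_top_of_involutive [BoundedOrder P] (hant : Antitone f) (hinv : Involutive f) :
    f ⊤ = ⊥ :=
  le_bot_iff.mp ((hant le_top).trans (hinv ⊥).le)

theorem map_sup_of_involutive (hant : Antitone f) (hinv : Involutive f) (x y : P) :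
    f (x ⊔ y) = f x ⊓ f y := by
  refine le_antisymm (le_inf (hant le_sup_left) (hant le_sup_right)) ?_
  have hxy : x ⊔ y ≤ f (f x ⊓ f y) :=
    sup_le ((hinv x).ge.trans (hant inf_le_left)) ((hinv y).ge.trans (hant inf_le_right))
  simpa only [hinv _] using hant hxy

theorem map_inf_of_involutive (hant : Antitone f) (hinv : Involutive f) (x y : P) :
    f (x ⊓ y) = f x ⊔ f y := by
  rw [← hinv (f x ⊔ f y), map_sup_of_involutive hant hinv, hinv x, hinv y]

variable (hant : Antitone f) (hinv : Involutive f)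
  (hom : ∀ x y : P, x ≤ y → y = x ⊔ (y ⊓ f x))
include hant hinv hom

theorem sup_apply_inf_eq_of_le {a y : P} (hay : a ≤ y) : (a ⊔ f y) ⊓ y = a := by
  have hfa : f a = f y ⊔ (f a ⊓ y) := by simpa only [hinv y] using hom _ _ (hant hay)
  apply hinv.injective
  rw [map_inf_of_involutive hant hinv, map_sup_of_involutive hant hinv, hinv y, sup_comm, ← hfa]

theorem sup_apply_inf_le_iff (x y w : P) :
    (x ⊔ f y) ⊓ y ≤ w ↔ x ≤ (w ⊓ y) ⊔ f y := by
  constructor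
  · intro h
    have hsplit : x ⊔ f y = f y ⊔ ((x ⊔ f y) ⊓ y) := by
      simpa only [hinv y] using hom (f y) (x ⊔ f y) le_sup_right
    calc x ≤ f y ⊔ ((x ⊔ f y) ⊓ y) := hsplit ▸ le_sup_left
      _ ≤ f y ⊔ (w ⊓ y) := sup_le_sup_left (le_inf h inf_le_right) _
      _ = (w ⊓ y) ⊔ f y := sup_comm _ _
  · intro h
    calc (x ⊔ f y) ⊓ y ≤ ((w ⊓ y) ⊔ f y) ⊓ y := inf_le_inf_right _ (sup_le h le_sup_right)
      _ = w ⊓ y := sup_apply_inf_eq_of_le hant hinv hom inf_le_right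
      _ ≤ w := inf_le_left

end Antitone

theorem stmt19_general {P : Type*} [Lattice P] [BoundedOrder P] (f : P → P)
    (hant : ∀ x y : P, x ≤ y → f y ≤ f x)
    (hinv : ∀ x : P, f (f x) = x)
    (hom : ∀ x y : P, x ≤ y → y = x ⊔ (y ⊓ f x)) :
    (∀ x : P, (x ⊔ f ⊤) ⊓ ⊤ = x) ∧
    (∀ x : P, (⊤ ⊔ f x) ⊓ x = x) ∧
    (∀ x y w : P, (x ⊔ f y) ⊓ y ≤ w ↔ x ≤ (w ⊓ y) ⊔ f y) ∧
    (∀ x : P, (⊥ ⊓ x) ⊔ f x = f x) := by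
  have hanti : Antitone f := fun x y hxy => hant x y hxy
  refine ⟨fun x => ?_, fun x => by simp, Antitone.sup_apply_inf_le_iff hanti hinv hom,
    fun x => by simp⟩
  simp [hanti.map_top_of_involutive hinv]

theorem stmt19 {P : Type*} [Lattice P] [BoundedOrder P] (f : P → P)
    (hc1 : ∀ x : P, x ⊓ f x = ⊥)
    (hc2 : ∀ x : P, x ⊔ f x = ⊤)
    (hant : ∀ x y : P, x ≤ y → f y ≤ f x)
    (hinv : ∀ x : P, f (f x) = x)
    (hom : ∀ x y : P, x ≤ y → y = x ⊔ (y ⊓ f x)) :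
    (∀ x : P, (x ⊔ f ⊤) ⊓ ⊤ = x) ∧
    (∀ x : P, (⊤ ⊔ f x) ⊓ x = x) ∧
    (∀ x y w : P, (x ⊔ f y) ⊓ y ≤ w ↔ x ≤ (w ⊓ y) ⊔ f y) ∧
    (∀ x : P, (⊥ ⊓ x) ⊔ f x = f x) :=
  stmt19_general f hant hinv hom
end
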